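/- arXiv:nlin/0701010 — 3 statements merged into one kernel-verified Lean document; each statement's English description precedes it below -/
import Mathlib

section
/- Let L and K be N×N matrices. Then exp(ξ(H)) = [[e^{ξ(L)}, Σ_{n≥1} n tₙ L^{n−1} e^{ξ(L)} + [e^{ξ(L)}, K]],[0, e^{ξ(L)}]], where H = [[L, I+[L,K]],[0, L]] and ξ(A) := Σ_{n≥1} tₙ Aⁿ (a finite sum, i.e., only finitely many tₙ are nonzero). -/
/-!
`H` is conjugate, by the shear `T = [[1, -K], [0, 1]]`, to `J = [[L, 1], [0, L]]`, so
`exp ξ(H) = T exp ξ(J) T⁻¹`. Since `Jⁿ = [[Lⁿ, n Lⁿ⁻¹], [0, Lⁿ]]`, we get `ξ(J) = [[A, C], [0, A]]`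
with `A = ξ(L)` and `C = ξ'(L)` commuting. Splitting `ξ(J)` into the block diagonal part and the
square-zero part `[[0, C], [0, 0]]`, which commute, gives `exp ξ(J) = [[e^A, C e^A], [0, e^A]]`;
conjugating back by `T` adds the commutator `[e^A, K]` to the corner.
-/

open Finset NormedSpace

theorem NormedSpace.exp_eq_one_add_of_mul_self_eq_zero {𝔸 : Type*} [Ring 𝔸] [Algebra ℚ 𝔸]
    [TopologicalSpace 𝔸] [IsTopologicalRing 𝔸] {x : 𝔸} (hx : x * x = 0) : exp x = 1 + x := by
  rw [exp_eq_tsum_rat]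
  refine (tsum_eq_sum (s := range 2) fun k hk => ?_).trans (by simp [sum_range_succ])
  obtain ⟨j, rfl⟩ : ∃ j, k = j + 2 := ⟨k - 2, by simp at hk; omega⟩
  rw [pow_add, sq, hx, mul_zero, smul_zero]

theorem Units.sum_smul_conj_pow {R A ι : Type*} [CommSemiring R] [Semiring A] [Algebra R A]
    (u : Aˣ) (x : A) (s : Finset ι) (c : ι → R) (e : ι → ℕ) :
    ∑ i ∈ s, c i • ((u : A) * x * ↑u⁻¹) ^ e i = u * (∑ i ∈ s, c i • x ^ e i) * ↑u⁻¹ := by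
  simp only [Units.conj_pow, mul_sum, sum_mul, mul_smul_comm, smul_mul_assoc]

namespace Matrix

variable {m n α : Type*}

theorem fromBlocks_sum [AddCommMonoid α] {ι : Type*} (s : Finset ι)
    (A : ι → Matrix m m α) (B : ι → Matrix m n α) (C : ι → Matrix n m α) (D : ι → Matrix n n α) :
    ∑ i ∈ s, fromBlocks (A i) (B i) (C i) (D i)
      = fromBlocks (∑ i ∈ s, A i) (∑ i ∈ s, B i) (∑ i ∈ s, C i) (∑ i ∈ s, D i) := by
  ext (i | i) (j | j) <;> simp [sum_apply]

variable [Fintype m] [Fintype n] [DecidableEq m] [DecidableEq n]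

theorem fromBlocks_pow_of_commute [Semiring α] {A B : Matrix n n α} (h : Commute A B) (k : ℕ) :
    fromBlocks A B 0 A ^ k = fromBlocks (A ^ k) (k • (A ^ (k - 1) * B)) 0 (A ^ k) := by
  induction k with
  | zero => simp [fromBlocks_one]
  | succ k ih =>
    rw [pow_succ, ih, fromBlocks_multiply]
    rcases k with _ | k
    · simp
    · have hBA : A ^ k * B * A = A ^ (k + 1) * B := by
        rw [mul_assoc, ← h.eq, ← mul_assoc, ← pow_succ]
      simp only [Nat.add_sub_cancel, mul_zero, zero_mul, add_zero, zero_add, ← pow_succ,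
        smul_mul_assoc, hBA, succ_nsmul' (A ^ (k + 1) * B) (k + 1)]

theorem sum_smul_fromBlocks_pow [CommSemiring α] {A B : Matrix n n α} (h : Commute A B)
    {ι : Type*} (s : Finset ι) (c : ι → α) (e : ι → ℕ) :
    ∑ i ∈ s, c i • fromBlocks A B 0 A ^ e i
      = fromBlocks (∑ i ∈ s, c i • A ^ e i) (∑ i ∈ s, (e i * c i) • (A ^ (e i - 1) * B)) 0
          (∑ i ∈ s, c i • A ^ e i) := by
  simp only [fromBlocks_pow_of_commute h, fromBlocks_smul, smul_zero, fromBlocks_sum,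
    sum_const_zero, mul_smul, Nat.cast_smul_eq_nsmul, smul_comm (c _)]

@[simps]
def fromBlocksDiagonalRingHom [Semiring α] :
    Matrix m m α × Matrix n n α →+* Matrix (m ⊕ n) (m ⊕ n) α where
  toFun X := fromBlocks X.1 0 0 X.2
  map_one' := fromBlocks_one
  map_mul' X Y := by simp [fromBlocks_multiply]
  map_zero' := fromBlocks_zero
  map_add' X Y := by simp [fromBlocks_add]

theorem continuous_fromBlocksDiagonalRingHom [Semiring α] [TopologicalSpace α] :
    Continuous (fromBlocksDiagonalRingHom : Matrix m m α × Matrix n n α →+* _) :=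
  continuous_fst.matrix_fromBlocks continuous_const continuous_const continuous_snd

open scoped Norms.Operator in
theorem exp_fromBlocks_diagonal [NormedRing α] [NormedAlgebra ℚ α] [CompleteSpace α]
    (A : Matrix m m α) (D : Matrix n n α) :
    exp (fromBlocks A 0 0 D) = fromBlocks (exp A) 0 0 (exp D) := by
  -- The operator-norm uniformity is not reducibly the product one, so instance search cannot
  -- find completeness for it on its own.
  have : @CompleteSpace (Matrix m m α) PseudoMetricSpace.toUniformSpace :=
    Matrix.instCompleteSpace m m α
  have : @CompleteSpace (Matrix n n α) PseudoMetricSpace.toUniformSpace :=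
    Matrix.instCompleteSpace n n α
  have h := map_exp fromBlocksDiagonalRingHom continuous_fromBlocksDiagonalRingHom (A, D)
  simp only [fromBlocksDiagonalRingHom_apply, Prod.fst_exp, Prod.snd_exp] at h
  exact h.symm

theorem exp_fromBlocks_of_commute [NormedRing α] [NormedAlgebra ℚ α] [CompleteSpace α]
    {A B : Matrix n n α} (h : Commute A B) :
    exp (fromBlocks A B 0 A) = fromBlocks (exp A) (B * exp A) 0 (exp A) := by
  set E : Matrix (n ⊕ n) (n ⊕ n) α := fromBlocks 0 B 0 0 with hE
  have hsplit : fromBlocks A B 0 A = E + fromBlocks A 0 0 A := by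
    simp [hE, fromBlocks_add]
  have hcomm : Commute E (fromBlocks A 0 0 A) := by
    simp [hE, Commute, SemiconjBy, fromBlocks_multiply, h.eq]
  have hsq : E * E = 0 := by
    simp [hE, fromBlocks_multiply]
  rw [hsplit, exp_add_of_commute _ _ hcomm, exp_eq_one_add_of_mul_self_eq_zero hsq,
    exp_fromBlocks_diagonal, add_mul, one_mul, hE, fromBlocks_multiply]
  simp [fromBlocks_add]

def shearUnit [Ring α] (K : Matrix m n α) : (Matrix (m ⊕ n) (m ⊕ n) α)ˣ where
  val := fromBlocks 1 (-K) 0 1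
  inv := fromBlocks 1 K 0 1
  val_inv := by simp [fromBlocks_multiply, fromBlocks_one]
  inv_val := by simp [fromBlocks_multiply, fromBlocks_one]

theorem shearUnit_conj_fromBlocks [Ring α] (K : Matrix m n α) (X : Matrix m m α)
    (Y : Matrix m n α) (Z : Matrix n n α) :
    (shearUnit K : Matrix (m ⊕ n) (m ⊕ n) α) * fromBlocks X Y 0 Z *
        (↑(shearUnit K)⁻¹ : Matrix (m ⊕ n) (m ⊕ n) α)
      = fromBlocks X (Y + (X * K - K * Z)) 0 Z := by
  change fromBlocks 1 (-K) 0 1 * fromBlocks X Y 0 Z * fromBlocks 1 K 0 1 = _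
  simp only [fromBlocks_multiply, Matrix.one_mul, Matrix.mul_one, Matrix.zero_mul,
    Matrix.mul_zero, Matrix.neg_mul, add_zero, zero_add]
  congr 1
  abel

end Matrix

open Matrix in
theorem stmt_12_general {N : ℕ} (L K : Matrix (Fin N) (Fin N) ℂ)
    (t : ℕ → ℂ) (m : ℕ) :
    NormedSpace.exp
        (∑ n ∈ Finset.Icc 1 m, t n • (Matrix.fromBlocks L (1 + (L * K - K * L)) 0 L) ^ n)
      = Matrix.fromBlocks
          (NormedSpace.exp (∑ n ∈ Finset.Icc 1 m, t n • L ^ n))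
          ((∑ n ∈ Finset.Icc 1 m, ((n : ℂ) * t n) •
              (L ^ (n - 1) * NormedSpace.exp (∑ i ∈ Finset.Icc 1 m, t i • L ^ i)))
            + (NormedSpace.exp (∑ n ∈ Finset.Icc 1 m, t n • L ^ n) * K
                - K * NormedSpace.exp (∑ n ∈ Finset.Icc 1 m, t n • L ^ n)))
          0
          (NormedSpace.exp (∑ n ∈ Finset.Icc 1 m, t n • L ^ n)) := by
  have hH : fromBlocks L (1 + (L * K - K * L)) 0 L
      = (shearUnit K : Matrix _ _ ℂ) * fromBlocks L 1 0 L * (↑(shearUnit K)⁻¹ : Matrix _ _ ℂ) :=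
    (shearUnit_conj_fromBlocks K L 1 L).symm
  have hcomm : Commute (∑ n ∈ Icc 1 m, t n • L ^ n)
      (∑ n ∈ Icc 1 m, ((n : ℂ) * t n) • (L ^ (n - 1) * 1)) :=
    .sum_left _ _ _ fun i _ => .sum_right _ _ _ fun j _ =>
      (((Commute.pow_pow_self L i (j - 1)).mul_right (.one_right _)).smul_left _).smul_right _
  rw [hH, Units.sum_smul_conj_pow, sum_smul_fromBlocks_pow (.one_right L), Matrix.exp_units_conj,
    exp_fromBlocks_of_commute hcomm, shearUnit_conj_fromBlocks]
  simp only [mul_one, sum_mul, smul_mul_assoc]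

/-- The exponential `exp(ξ(H))` for `H = [[L, I + [L,K]],[0, L]]`, where
`ξ(A) = Σ_{n=1}^{m} tₙ Aⁿ` (finitely many nonzero `tₙ`). -/
theorem stmt_12 {N : ℕ} (L K : Matrix (Fin N) (Fin N) ℂ)
    (t : ℕ → ℂ) (m : ℕ) (ht : ∀ n, m < n → t n = 0) :
    NormedSpace.exp
        (∑ n ∈ Finset.Icc 1 m, t n • (Matrix.fromBlocks L (1 + (L * K - K * L)) 0 L) ^ n)
      = Matrix.fromBlocks
          (NormedSpace.exp (∑ n ∈ Finset.Icc 1 m, t n • L ^ n))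
          ((∑ n ∈ Finset.Icc 1 m, ((n : ℂ) * t n) •
              (L ^ (n - 1) * NormedSpace.exp (∑ i ∈ Finset.Icc 1 m, t i • L ^ i)))
            + (NormedSpace.exp (∑ n ∈ Finset.Icc 1 m, t n • L ^ n) * K
                - K * NormedSpace.exp (∑ n ∈ Finset.Icc 1 m, t n • L ^ n)))
          0
          (NormedSpace.exp (∑ n ∈ Finset.Icc 1 m, t n • L ^ n)) :=
  stmt_12_general L K t m
end

section
/- In the algebra R of pseudo-differential operators with coefficients in a differential algebra, for any pseudo-differential operator V and for 𝔏 = ∂ + u₂∂⁻¹ + u₃∂⁻² + ⋯, the identity res((S π₋)ᵐ V) = res(𝒟ₘ V) holds for all m ≥ 0, where S(V) := 𝔏V, π₋(V) := V_{<0} (the part of V with only negative powers of ∂), 𝒟₀ = 1, and 𝒟ₘ := (𝒟_{m−1} 𝔏)_{≥0}. -/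
/-- In the algebra of pseudo-differential operators (axiomatized by a ring `R`
with an additive projection `pos` onto the differential-operator part, so that
`V_{<0} = V - pos V`, and an additive residue map `res` killing products of two
nonnegative parts and products of two negative parts), one has
`res((S π₋)ᵐ V) = res(𝒟ₘ V)` where `S` is left multiplication by the Lax
operator `𝔏`, `𝒟₀ = 1` and `𝒟ₘ = (𝒟_{m-1} 𝔏)_{≥0}`. -/
theorem stmt_15 {R A : Type*} [Ring R] [AddCommGroup A]
    (res : R →+ A) (pos : R →+ R) (Lax : R)
    (hposproj : ∀ V : R, pos (pos V) = pos V)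
    (hpospos : ∀ V W : R, res (pos V * pos W) = 0)
    (hnegneg : ∀ V W : R, res ((V - pos V) * (W - pos W)) = 0)
    (D : ℕ → R)
    (hD0 : D 0 = 1)
    (hDs : ∀ m : ℕ, D (m + 1) = pos (D m * Lax)) :
    ∀ (m : ℕ) (V : R),
      res ((fun X => Lax * (X - pos X))^[m] V) = res (D m * V) := by
  have key : ∀ W V : R, res (W * (V - pos V)) = res (pos W * V) := by
    intro W V
    have h1 := hnegneg W V
    have h2 := hpospos W V
    have hsplit : W * (V - pos V)
        = (W - pos W) * (V - pos V) + (pos W * V - pos W * pos V) := by noncomm_ring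
    calc res (W * (V - pos V))
        = res ((W - pos W) * (V - pos V)) + (res (pos W * V) - res (pos W * pos V)) := by
          rw [hsplit, map_add, map_sub]
      _ = res (pos W * V) := by rw [h1, h2]; abel
  intro m
  induction m with
  | zero => intro V; simp [hD0]
  | succ n ih =>
      intro V
      rw [Function.iterate_succ_apply, ih (Lax * (V - pos V)), hDs,
        ← mul_assoc, key (D n * Lax) V]
end

section
/- Let A be an associative algebra, g ∈ A a fixed element, and L, R : A → A linear maps satisfying [L,R] = 0, L(a∘b) = L(a)∘b, R(a∘b) = a∘R(b). Augment A by an element f with f∘f := g, f∘a := L(a), a∘f := R(a). Then the resulting algebra 𝔸 = ℂf ⊕ A is weakly nonassociative, i.e., (x, y∘z, w) = 0 for all x,y,z,w ∈ 𝔸, and if there exist a,b ∈ A with R(a)∘b ≠ a∘L(b) then A equals the middle nucleus 𝔸' and 𝔸 is not associative. -/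
/-- The multiplication on the augmented algebra `𝔸 = ℂ f ⊕ A`: the element
`(α, a)` stands for `α f + a`, with `f ∘ f = g`, `f ∘ a = L a`, `a ∘ f = R a`
extended bilinearly. -/
noncomputable def wmul {A : Type*} [Ring A] [Algebra ℂ A]
    (g : A) (L R : A →ₗ[ℂ] A) : ℂ × A → ℂ × A → ℂ × A :=
  fun x y => (0, (x.1 * y.1) • g + x.1 • L y.2 + y.1 • R x.2 + x.2 * y.2)

/-- Any element with vanishing `f`-component lies in the middle nucleus. -/
lemma mid_nuc {A : Type*} [Ring A] [Algebra ℂ A]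
    (g : A) (L R : A →ₗ[ℂ] A)
    (hcomm : ∀ a : A, L (R a) = R (L a))
    (hL : ∀ a b : A, L (a * b) = L a * b)
    (hR : ∀ a b : A, R (a * b) = a * R b)
    (x p q : ℂ × A) (hx : x.1 = 0) :
    wmul g L R (wmul g L R p x) q = wmul g L R p (wmul g L R x q) := by
  simp only [wmul, hx, mul_zero, zero_mul, zero_smul, add_zero, zero_add, Prod.mk.injEq,
    true_and, map_add, map_smul, hcomm, hL, hR]
  simp only [smul_add, mul_add, add_mul, smul_mul_assoc, mul_smul_comm, mul_assoc, smul_comm q.1]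
  abel

/-- For an associative algebra `A`, `g ∈ A`, and commuting linear maps `L, R`
with `L(ab) = L(a)b`, `R(ab) = aR(b)`, the augmented algebra `𝔸 = ℂf ⊕ A` is
weakly nonassociative; and if `R(a) L-twisted associativity fails for some
`a, b` then the middle nucleus of `𝔸` is exactly `A` and `𝔸` is not
associative. -/
theorem stmt_19 {A : Type*} [Ring A] [Algebra ℂ A]
    (g : A) (L R : A →ₗ[ℂ] A)
    (hcomm : ∀ a : A, L (R a) = R (L a))
    (hL : ∀ a b : A, L (a * b) = L a * b)
    (hR : ∀ a b : A, R (a * b) = a * R b) :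
    (∀ x y z w : ℂ × A,
      wmul g L R (wmul g L R x (wmul g L R y z)) w
        = wmul g L R x (wmul g L R (wmul g L R y z) w)) ∧
    ((∃ a b : A, R a * b ≠ a * L b) →
      ({x : ℂ × A | ∀ p q : ℂ × A,
          wmul g L R (wmul g L R p x) q = wmul g L R p (wmul g L R x q)}
        = {x : ℂ × A | x.1 = 0}) ∧
      ¬ ∀ x y z : ℂ × A,
          wmul g L R (wmul g L R x y) z = wmul g L R x (wmul g L R y z)) := by
  constructor
  · intro x y z w
    exact mid_nuc g L R hcomm hL hR (wmul g L R y z) x w rfl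
  · rintro ⟨a, b, hab⟩
    constructor
    · ext x
      simp only [Set.mem_setOf_eq]
      constructor
      · intro h
        by_contra hx1
        apply hab
        have := h (0, a) (0, b)
        simp only [wmul, zero_mul, mul_zero, zero_smul, zero_add, add_zero, one_smul,
          Prod.mk.injEq, true_and] at this
        rw [add_mul, mul_add, smul_mul_assoc, mul_smul_comm, mul_assoc] at this
        exact smul_right_injective A hx1 (add_right_cancel this)
      · intro hx p q
        exact mid_nuc g L R hcomm hL hR x p q hx
    · intro h
      apply hab
      have := h (0, a) (1, 0) (0, b)
      simp only [wmul, zero_mul, mul_zero, mul_one, one_mul, zero_smul, one_smul, map_zero,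
        zero_add, add_zero, Prod.mk.injEq, true_and] at this
      simpa using this
end
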